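/- arXiv:2605.09200 — 4 statements merged into one kernel-verified Lean document; each statement's English description precedes it below -/
import Mathlib

section
/- Let Π be a nonempty countable type and let F be a set of functions f : Π → ℝ with 0 ≤ f(π) ≤ 1 for all π. Fix α ∈ (0,1) and c > 0. Suppose there exists a probability mass function p on Π such that for every f ∈ F, the p-probability of the set {π : (⨆_{π'} f(π')) − f(π) ≤ α} is at least c. Then there exists a finite subset H ⊆ Π such that for every f ∈ F there is some π ∈ H with (⨆_{π'} f(π')) − f(π) ≤ α; that is, F admits a finite α-hitting set. -/
/-- If a countable arm space admits a distribution placing mass at least `c > 0` on the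
`α`-good region of every `f ∈ F`, then `F` admits a finite `α`-hitting set. -/
theorem stmt_0 {Arm : Type*} [Nonempty Arm] [Countable Arm]
    (F : Set (Arm → ℝ)) (hF : ∀ f ∈ F, ∀ π, f π ∈ Set.Icc (0:ℝ) 1)
    (α : ℝ) (hα : α ∈ Set.Ioo (0:ℝ) 1) (c : ℝ) (hc : 0 < c)
    (p : Arm → ℝ) (hp0 : ∀ π, 0 ≤ p π) (hp1 : ∑' π, p π = 1)
    (hcov : ∀ f ∈ F, c ≤ ∑' x : {π : Arm | (⨆ π', f π') - f π ≤ α}, p x) :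
    ∃ H : Finset Arm, ∀ f ∈ F, ∃ π ∈ H, (⨆ π', f π') - f π ≤ α := by
  have hsum : Summable p := by
    by_contra h
    rw [tsum_eq_zero_of_not_summable h] at hp1
    norm_num at hp1
  have hlt : (1 : ℝ) - c < ∑' π, p π := by rw [hp1]; linarith
  obtain ⟨H, hH⟩ := (hsum.hasSum.eventually (eventually_gt_nhds hlt)).exists
  refine ⟨H, fun f hf => ?_⟩
  by_contra hnone
  push_neg at hnone
  have hsub : {π : Arm | (⨆ π', f π') - f π ≤ α} ⊆ ((H : Set Arm)ᶜ) := by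
    intro π hπ hπH
    exact absurd hπ (not_le.mpr (hnone π hπH))
  have h1 : ∑' x : {π : Arm | (⨆ π', f π') - f π ≤ α}, p x
      ≤ ∑' x : ↑((H : Set Arm)ᶜ), p x :=
    Summable.tsum_le_tsum_of_inj (Set.inclusion hsub) (Set.inclusion_injective hsub)
      (fun i _ => hp0 i) (fun _ => le_rfl)
      (hsum.subtype _) (hsum.subtype _)
  have h2 : ∑ x ∈ H, p x + ∑' x : ↑((H : Set Arm)ᶜ), p x = ∑' π, p π :=
    Summable.sum_add_tsum_compl (s := H) hsum
  have := hcov f hf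
  rw [hp1] at h2
  linarith
end

section
/- For every probability measure p on ℝ with p([0,1]) = 1 and every α ∈ (0,1/2), there exist measurable functions f₁, f₂ : ℝ → ℝ, each taking values in {0, 1/2, 1} on [0,1] with λ({π∈[0,1] : fᵢ(π)=1}) = λ({π∈[0,1] : fᵢ(π)=0}) = 1/3 for i = 1,2 (so f₁, f₂ ∈ F₂), such that, setting g = (f₁ + f₂)/2 ∈ co(F₂), one has p({π ∈ [0,1] : sup_{π'∈[0,1]} g(π') − g(π) ≤ α}) = 0. Hence γ_{co(F₂),α} = 0 for every α ∈ (0,1/2). -/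
open MeasureTheory

/-- Membership in the class `F₂`: measurable, ternary-valued on `[0,1]`, with
`λ({f = 1}) = λ({f = 0}) = 1/3` in `[0,1]`. -/
def MemF2 (f : ℝ → ℝ) : Prop :=
  Measurable f ∧ (∀ π ∈ Set.Icc (0:ℝ) 1, f π ∈ ({0, 1/2, 1} : Set ℝ)) ∧
  volume {π ∈ Set.Icc (0:ℝ) 1 | f π = 1} = 1/3 ∧
  volume {π ∈ Set.Icc (0:ℝ) 1 | f π = 0} = 1/3

/-- For every probability measure `p` supported on `[0,1]` and every `α ∈ (0,1/2)`,
there are `f₁, f₂ ∈ F₂` whose average `g = (f₁+f₂)/2 ∈ co(F₂)` has `α`-good region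
of `p`-measure `0`; hence `γ_{co(F₂),α} = 0`. -/
theorem stmt_8 (p : Measure ℝ) [IsProbabilityMeasure p]
    (hp : p (Set.Icc (0:ℝ) 1) = 1)
    (α : ℝ) (hα : α ∈ Set.Ioo (0:ℝ) (1/2)) :
    ∃ f₁ f₂ : ℝ → ℝ, MemF2 f₁ ∧ MemF2 f₂ ∧
      p {π ∈ Set.Icc (0:ℝ) 1 |
        (⨆ π' : Set.Icc (0:ℝ) 1, (f₁ π' + f₂ π') / 2) - (f₁ π + f₂ π) / 2 ≤ α}
        = 0 := by
  -- choose a non-atom x of p in (0, 1/3)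
  obtain ⟨x, hx01, hxp⟩ : ∃ x ∈ Set.Ioo (0:ℝ) (1/3), p {x} = 0 := by
    by_contra h
    push_neg at h
    have hc : Set.Countable {y : ℝ | 0 < p {y}} :=
      Measure.countable_meas_pos_of_disjoint_iUnion (μ := p)
        (As := fun y : ℝ => {y}) (fun y => measurableSet_singleton y)
        (fun a b hab => by simp [Function.onFun, Set.disjoint_singleton, hab])
    have hsub : Set.Ioo (0:ℝ) (1/3) ⊆ {y : ℝ | 0 < p {y}} := by
      intro y hy
      exact pos_iff_ne_zero.mpr (h y hy)
    have h0 : volume (Set.Ioo (0:ℝ) (1/3)) = 0 :=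
      measure_mono_null hsub (hc.measure_zero volume)
    rw [Real.volume_Ioo] at h0
    simp [ENNReal.ofReal_eq_zero] at h0
  set f₁ : ℝ → ℝ := fun π => if π < 1/3 then 1 else if π < 2/3 then 0 else 1/2 with hf₁
  set f₂ : ℝ → ℝ := fun π => if π = x then 1 else if π < 1/3 then 0 else if π < 2/3 then 1 else 1/2 with hf₂
  have hthird : (ENNReal.ofReal (1/3) : ENNReal) = 1/3 := by
    rw [ENNReal.ofReal_div_of_pos (by norm_num)]
    norm_num
  have hxlt : x < 1/3 := hx01.2
  have hxIcc : x ∈ Set.Icc (0:ℝ) 1 := ⟨le_of_lt hx01.1, by linarith⟩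
  have hm1 : Measurable f₁ := by
    apply Measurable.ite (measurableSet_Iio (a := (1/3:ℝ))) measurable_const
    exact Measurable.ite (measurableSet_Iio (a := (2/3:ℝ))) measurable_const measurable_const
  have hm2 : Measurable f₂ := by
    apply Measurable.ite (MeasurableSet.singleton x) measurable_const
    apply Measurable.ite (measurableSet_Iio (a := (1/3:ℝ))) measurable_const
    exact Measurable.ite (measurableSet_Iio (a := (2/3:ℝ))) measurable_const measurable_const
  have hmem1 : MemF2 f₁ := by
    refine ⟨hm1, ?_, ?_, ?_⟩
    · intro π _
      simp only [hf₁, Set.mem_insert_iff, Set.mem_singleton_iff]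
      split_ifs <;> norm_num
    · have hset : {π ∈ Set.Icc (0:ℝ) 1 | f₁ π = 1} = Set.Ico (0:ℝ) (1/3) := by
        ext π
        simp only [Set.mem_setOf_eq, Set.mem_Icc, Set.mem_Ico, hf₁]
        constructor
        · rintro ⟨⟨ha, hb⟩, hv⟩
          refine ⟨ha, ?_⟩
          by_contra hge
          rw [if_neg hge] at hv
          split_ifs at hv <;> norm_num at hv
        · rintro ⟨ha, hb⟩
          exact ⟨⟨ha, by linarith⟩, if_pos hb⟩
      rw [hset, Real.volume_Ico]
      rw [show (1/3 - 0 : ℝ) = 1/3 by norm_num, hthird]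
    · have hset : {π ∈ Set.Icc (0:ℝ) 1 | f₁ π = 0} = Set.Ico (1/3:ℝ) (2/3) := by
        ext π
        simp only [Set.mem_setOf_eq, Set.mem_Icc, Set.mem_Ico, hf₁]
        constructor
        · rintro ⟨⟨ha, hb⟩, hv⟩
          by_cases h1 : π < 1/3
          · rw [if_pos h1] at hv; norm_num at hv
          by_cases h2 : π < 2/3
          · exact ⟨not_lt.mp h1, h2⟩
          · rw [if_neg h1, if_neg h2] at hv; norm_num at hv
        · rintro ⟨ha, hb⟩
          refine ⟨⟨by linarith, by linarith⟩, ?_⟩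
          rw [if_neg (not_lt.mpr ha), if_pos hb]
      rw [hset, Real.volume_Ico]
      rw [show (2/3 - 1/3 : ℝ) = 1/3 by norm_num, hthird]
  have hmem2 : MemF2 f₂ := by
    refine ⟨hm2, ?_, ?_, ?_⟩
    · intro π _
      simp only [hf₂, Set.mem_insert_iff, Set.mem_singleton_iff]
      split_ifs <;> norm_num
    · have hset : {π ∈ Set.Icc (0:ℝ) 1 | f₂ π = 1} = {x} ∪ Set.Ico (1/3:ℝ) (2/3) := by
        ext π
        simp only [Set.mem_setOf_eq, Set.mem_Icc, Set.mem_Ico, Set.mem_union,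
          Set.mem_singleton_iff, hf₂]
        constructor
        · rintro ⟨⟨ha, hb⟩, hv⟩
          by_cases h0 : π = x
          · exact Or.inl h0
          rw [if_neg h0] at hv
          by_cases h1 : π < 1/3
          · rw [if_pos h1] at hv; norm_num at hv
          by_cases h2 : π < 2/3
          · exact Or.inr ⟨not_lt.mp h1, h2⟩
          · rw [if_neg h1, if_neg h2] at hv; norm_num at hv
        · rintro (rfl | ⟨ha, hb⟩)
          · exact ⟨hxIcc, if_pos rfl⟩
          · refine ⟨⟨by linarith, by linarith⟩, ?_⟩
            rw [if_neg (by intro h; rw [h] at ha; linarith), if_neg (not_lt.mpr ha), if_pos hb]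
      rw [hset]
      have hIco : volume (Set.Ico (1/3:ℝ) (2/3)) = 1/3 := by
        rw [Real.volume_Ico]
        rw [show (2/3 - 1/3 : ℝ) = 1/3 by norm_num]
        rw [ENNReal.ofReal_div_of_pos (by norm_num)]
        norm_num
      apply le_antisymm
      · calc volume ({x} ∪ Set.Ico (1/3:ℝ) (2/3))
              ≤ volume {x} + volume (Set.Ico (1/3:ℝ) (2/3)) := measure_union_le _ _
          _ = 1/3 := by rw [Real.volume_singleton, zero_add]; exact hIco
      · rw [← hIco]
        exact measure_mono Set.subset_union_right
    · have hset : {π ∈ Set.Icc (0:ℝ) 1 | f₂ π = 0} = Set.Ico (0:ℝ) (1/3) \ {x} := by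
        ext π
        simp only [Set.mem_setOf_eq, Set.mem_Icc, Set.mem_Ico, Set.mem_diff,
          Set.mem_singleton_iff, hf₂]
        constructor
        · rintro ⟨⟨ha, hb⟩, hv⟩
          by_cases h0 : π = x
          · rw [if_pos h0] at hv; norm_num at hv
          rw [if_neg h0] at hv
          by_cases h1 : π < 1/3
          · exact ⟨⟨ha, h1⟩, h0⟩
          rw [if_neg h1] at hv
          split_ifs at hv <;> norm_num at hv
        · rintro ⟨⟨ha, hb⟩, hne⟩
          exact ⟨⟨ha, by linarith⟩, by rw [if_neg hne, if_pos hb]⟩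
      rw [hset, measure_diff_null (by simp), Real.volume_Ico]
      rw [show (1/3 - 0 : ℝ) = 1/3 by norm_num, hthird]
  refine ⟨f₁, f₂, hmem1, hmem2, ?_⟩
  -- the value at any π ≠ x is 1/2; at x it is 1
  have hsum : ∀ π : ℝ, π ≠ x → f₁ π + f₂ π = 1 := by
    intro π hne
    simp only [hf₁, hf₂, if_neg hne]
    split_ifs <;> norm_num
  have hsumx : f₁ x + f₂ x = 2 := by
    simp only [hf₁, hf₂, if_pos rfl, if_pos hxlt]
    norm_num
  have hub : ∀ π' : Set.Icc (0:ℝ) 1, (f₁ π' + f₂ π') / 2 ≤ 1 := by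
    intro π'
    by_cases hne : (π' : ℝ) = x
    · rw [hne, hsumx]; norm_num
    · rw [hsum π' hne]; norm_num
  have hS : (⨆ π' : Set.Icc (0:ℝ) 1, (f₁ π' + f₂ π') / 2) = 1 := by
    apply le_antisymm (ciSup_le hub)
    have hb : BddAbove (Set.range fun π' : Set.Icc (0:ℝ) 1 => (f₁ π' + f₂ π') / 2) := by
      refine ⟨1, ?_⟩
      rintro r ⟨π', rfl⟩
      exact hub π'
    have := le_ciSup hb (⟨x, hxIcc⟩ : Set.Icc (0:ℝ) 1)
    simpa [hsumx] using this
  have hgood : {π ∈ Set.Icc (0:ℝ) 1 |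
      (⨆ π' : Set.Icc (0:ℝ) 1, (f₁ π' + f₂ π') / 2) - (f₁ π + f₂ π) / 2 ≤ α} = {x} := by
    ext π
    simp only [Set.mem_setOf_eq, Set.mem_singleton_iff, hS]
    constructor
    · rintro ⟨hπIcc, hle⟩
      by_contra hne
      rw [hsum π hne] at hle
      have : (1:ℝ) - 1/2 ≤ α := by linarith
      linarith [hα.2]
    · rintro rfl
      refine ⟨hxIcc, ?_⟩
      rw [hsumx]
      norm_num
      linarith [hα.1]
  rw [hgood]
  exact hxp
end

section
/- Let Π be a nonempty measurable space, let F be a set of measurable functions Π → ℝ taking values in [0,1], let I be a finite nonempty set of probability measures on Π, and let α, β ≥ 0. Suppose that for every g in the convex hull of F there exists p ∈ I with p({π : (⨆_{π'} g(π')) − g(π) ≤ α}) ≥ 1 − β. Then for every T ≥ 1 and all f₁, …, f_T ∈ F, there exists p ∈ I such that ∫ Σ_{t=1}^T f_t(π) dp(π) ≥ (⨆_{π*} Σ_{t=1}^T f_t(π*)) − (α + β)·T. -/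
open MeasureTheory

/-- If `I` is a finite `(α,β)`-distribution cover of the convex hull of `F`, then for
any sequence `f₁, …, f_T ∈ F` the best distribution in `I` has expected cumulative
reward within `(α+β)·T` of the best fixed arm. -/
theorem stmt_14 {Arm : Type*} [MeasurableSpace Arm] [Nonempty Arm]
    (F : Set (Arm → ℝ))
    (hFm : ∀ f ∈ F, Measurable f)
    (hF : ∀ f ∈ F, ∀ π, f π ∈ Set.Icc (0:ℝ) 1)
    (I : Finset (Measure Arm)) (hI : I.Nonempty)
    (hprob : ∀ p ∈ I, IsProbabilityMeasure p)
    (α β : ℝ) (hα : 0 ≤ α) (hβ : 0 ≤ β)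
    (hcov : ∀ g ∈ convexHull ℝ F, ∃ p ∈ I,
      ENNReal.ofReal (1 - β) ≤ p {π | (⨆ π', g π') - g π ≤ α})
    (T : ℕ) (hT : 1 ≤ T) (f : Fin T → Arm → ℝ) (hf : ∀ t, f t ∈ F) :
    ∃ p ∈ I, (⨆ πstar, ∑ t, f t πstar) - (α + β) * T ≤ ∫ π, (∑ t, f t π) ∂p := by
  have hT0 : (0:ℝ) < T := by exact_mod_cast hT
  set g : Arm → ℝ := fun π => (∑ t, f t π) / T with hg
  -- g values in [0,1]
  have hg01 : ∀ π, g π ∈ Set.Icc (0:ℝ) 1 := by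
    intro π
    have h0 : (0:ℝ) ≤ ∑ t, f t π :=
      Finset.sum_nonneg fun t _ => (hF _ (hf t) π).1
    have h1 : (∑ t, f t π) ≤ T := by
      calc (∑ t, f t π) ≤ ∑ _t : Fin T, (1:ℝ) :=
            Finset.sum_le_sum fun t _ => (hF _ (hf t) π).2
        _ = T := by simp
    constructor
    · positivity
    · rw [div_le_one hT0]; exact h1
  -- g is in the convex hull
  have hgch : g ∈ convexHull ℝ F := by
    have := Finset.centerMass_mem_convexHull (Finset.univ : Finset (Fin T))
      (w := fun _ => (1:ℝ)) (z := f) (fun _ _ => zero_le_one)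
      (by simp; exact_mod_cast hT0) (fun t _ => hf t)
    convert this using 1
    funext π
    simp [Finset.centerMass, hg, Finset.sum_apply, div_eq_inv_mul, Finset.mul_sum]
  obtain ⟨p, hpI, hpA⟩ := hcov g hgch
  haveI := hprob p hpI
  refine ⟨p, hpI, ?_⟩
  -- measurability
  have hgm : Measurable g := by
    apply Measurable.div_const
    exact Finset.measurable_sum _ fun t _ => hFm _ (hf t)
  set A : Set Arm := {π | (⨆ π', g π') - g π ≤ α} with hA
  have hAm : MeasurableSet A := by
    apply measurableSet_le (by measurability)
    exact measurable_const
  -- sup of g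
  have hbdd : BddAbove (Set.range g) := ⟨1, by rintro _ ⟨π, rfl⟩; exact (hg01 π).2⟩
  set c : ℝ := ⨆ π', g π' with hc
  have hc1 : c ≤ 1 := ciSup_le fun π => (hg01 π).2
  have hc0 : 0 ≤ c := le_trans (hg01 Classical.ofNonempty).1 (le_ciSup hbdd _)
  -- integrability of g
  have hgint : Integrable g p := by
    refine (integrable_const (1:ℝ)).mono' hgm.aestronglyMeasurable ?_
    filter_upwards with π
    rw [Real.norm_eq_abs, abs_le]
    exact ⟨by linarith [(hg01 π).1], (hg01 π).2⟩
  -- lower bound the integral of g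
  have hind : ∀ π, A.indicator (fun _ => c - α) π ≤ g π := by
    intro π
    by_cases hπ : π ∈ A
    · rw [Set.indicator_of_mem hπ]
      have : c - g π ≤ α := hπ
      linarith
    · rw [Set.indicator_of_notMem hπ]; exact (hg01 π).1
  have hint1 : (c - α) * (p A).toReal ≤ ∫ π, g π ∂p := by
    have := integral_mono ((integrable_const (c - α)).indicator hAm) hgint hind
    rwa [integral_indicator_const _ hAm, smul_eq_mul, mul_comm] at this
  have hpA1 : (p A).toReal ≤ 1 := by
    have := prob_le_one (μ := p) (s := A)
    exact ENNReal.toReal_le_of_le_ofReal zero_le_one (by simpa using this)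
  have hpA0 : 0 ≤ (p A).toReal := ENNReal.toReal_nonneg
  have hkey : c - α - β ≤ (c - α) * (p A).toReal := by
    rcases le_or_gt (c - α) 0 with hca | hca
    · nlinarith
    · have h1β : 1 - β ≤ (p A).toReal := by
        rcases le_or_gt (1 - β) 0 with h | h
        · linarith
        · have hfin : p A ≠ ⊤ := measure_ne_top p A
          rw [← ENNReal.ofReal_le_iff_le_toReal hfin] at *
          exact hpA
      nlinarith
  have hintg : c - α - β ≤ ∫ π, g π ∂p := le_trans hkey hint1
  -- convert back to the sum
  have hsum_eq : ∀ π, (∑ t, f t π) = T * g π := by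
    intro π; rw [hg]; field_simp
  have hsup : (⨆ πstar, ∑ t, f t πstar) ≤ T * c := by
    apply ciSup_le
    intro π
    rw [hsum_eq π]
    exact mul_le_mul_of_nonneg_left (le_ciSup hbdd π) (le_of_lt hT0)
  calc (⨆ πstar, ∑ t, f t πstar) - (α + β) * T ≤ T * c - (α + β) * T := by linarith
    _ ≤ T * (c - α - β) := by ring_nf; linarith
    _ ≤ T * ∫ π, g π ∂p := mul_le_mul_of_nonneg_left hintg (le_of_lt hT0)
    _ = ∫ π, (∑ t, f t π) ∂p := by
        rw [← integral_const_mul]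
        exact integral_congr_ae (Filter.Eventually.of_forall fun π => (hsum_eq π).symm)
end

section
/- Let N ≥ 2 and M ∈ ℕ satisfy N·3^{2M/3} ≤ 3^{M−1} and (log N)·3^{−M/3} ≤ 1/50. Let p₁, …, p_N be probability measures on ℝ with p_k([0,1]) = 1 for each k, and partition [0,1] into 3^M consecutive intervals A₁, …, A_{3^M} of equal length 3^{−M}. Then there exist a set R of indices with |R| = 2·3^{M−1} such that p_k(A_i) ≤ 3^{−2M/3} for every i ∈ R and every k ≤ N, and a subset I ⊆ R with |I| = 3^{M−1}, such that max_{k ≤ N} ( Σ_{i ∈ I} p_k(A_i) − Σ_{i ∈ R∖I} p_k(A_i) ) ≤ 1/5. -/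
open MeasureTheory


lemma sum_sq_signs {ι : Type*} [DecidableEq ι] (t : Finset ι) (y : ι → ℝ) :
    ∑ s ∈ t.powerset, (∑ j ∈ t, (if j ∈ s then y j else - y j))^2
      = 2 ^ t.card * ∑ j ∈ t, (y j)^2 := by
  induction t using Finset.induction_on with
  | empty => simp
  | @insert a t ha ih =>
    rw [Finset.powerset_insert, Finset.sum_union, Finset.sum_image]
    · have key : ∀ s ∈ t.powerset,
          (∑ j ∈ insert a t, (if j ∈ s then y j else - y j))
            = (∑ j ∈ t, (if j ∈ s then y j else - y j)) - y a ∧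
          (∑ j ∈ insert a t, (if j ∈ insert a s then y j else - y j))
            = (∑ j ∈ t, (if j ∈ s then y j else - y j)) + y a := by
        intro s hs
        have has : a ∉ s := fun h => ha (Finset.mem_powerset.1 hs h)
        constructor
        · rw [Finset.sum_insert ha, if_neg has]; ring
        · rw [Finset.sum_insert ha, if_pos (Finset.mem_insert_self a s)]
          have : ∀ j ∈ t, (if j ∈ insert a s then y j else - y j)
              = (if j ∈ s then y j else - y j) := by
            intro j hj
            have : j ≠ a := fun h => ha (h ▸ hj)
            simp [Finset.mem_insert, this]
          rw [Finset.sum_congr rfl this]; ring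
      calc ∑ s ∈ t.powerset, (∑ j ∈ insert a t, (if j ∈ s then y j else - y j))^2
            + ∑ s ∈ t.powerset, (∑ j ∈ insert a t, (if j ∈ insert a s then y j else - y j))^2
          = ∑ s ∈ t.powerset, (((∑ j ∈ t, (if j ∈ s then y j else - y j)) - y a)^2
              + ((∑ j ∈ t, (if j ∈ s then y j else - y j)) + y a)^2) := by
            rw [← Finset.sum_add_distrib]
            refine Finset.sum_congr rfl fun s hs => ?_
            rw [(key s hs).1, (key s hs).2]
        _ = ∑ s ∈ t.powerset, (2 * (∑ j ∈ t, (if j ∈ s then y j else - y j))^2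
              + 2 * (y a)^2) := Finset.sum_congr rfl fun s _ => by ring
        _ = 2 * ∑ s ∈ t.powerset, (∑ j ∈ t, (if j ∈ s then y j else - y j))^2
              + (t.powerset.card : ℝ) * (2 * (y a)^2) := by
            rw [Finset.sum_add_distrib, ← Finset.mul_sum, Finset.sum_const, nsmul_eq_mul]
        _ = 2 ^ (insert a t).card * ∑ j ∈ insert a t, (y j)^2 := by
            rw [ih, Finset.card_powerset, Finset.card_insert_of_notMem ha,
              Finset.sum_insert ha]
            push_cast
            ring
    · intro s hs s' hs' h
      have has : a ∉ s := fun hh => ha (Finset.mem_powerset.1 hs hh)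
      have has' : a ∉ s' := fun hh => ha (Finset.mem_powerset.1 hs' hh)
      have := congrArg (Finset.erase · a) h
      simpa [Finset.erase_insert, has, has'] using this
    · rw [Finset.disjoint_left]
      intro s hs hs2
      obtain ⟨u, hu, rfl⟩ := Finset.mem_image.1 hs2
      exact ha (Finset.mem_powerset.1 hs (Finset.mem_insert_self a u))


lemma A_disj {M : ℕ} (A : Fin (3^M) → Set ℝ)
    (hA : ∀ i : Fin (3^M), A i =
      if (i : ℕ) = 0 then Set.Icc (0:ℝ) (1 / 3^M)
      else Set.Ioc ((i : ℝ) / 3^M) (((i : ℝ) + 1) / 3^M)) :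
    ∀ i j : Fin (3^M), i ≠ j → Disjoint (A i) (A j) := by
  have hpos : (0:ℝ) < 3^M := by positivity
  have key : ∀ i j : Fin (3^M), (i:ℕ) < (j:ℕ) → Disjoint (A i) (A j) := by
    intro i j hij
    rw [Set.disjoint_left]
    intro x hxi hxj
    have hub : x ≤ ((i:ℝ) + 1) / 3^M := by
      rw [hA i] at hxi
      split_ifs at hxi with h
      · have : ((i:ℝ)) = 0 := by exact_mod_cast h
        rw [this]
        simpa using hxi.2
      · exact hxi.2
    have hj0 : (j:ℕ) ≠ 0 := by omega
    rw [hA j, if_neg hj0] at hxj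
    have hlb : ((j:ℝ)) / 3^M < x := hxj.1
    have : ((i:ℝ) + 1) ≤ (j:ℝ) := by exact_mod_cast hij
    have h2 : ((i:ℝ) + 1) / 3^M ≤ ((j:ℝ)) / 3^M := by
      gcongr
    linarith
  intro i j hij
  rcases lt_or_gt_of_ne (fun h : (i:ℕ) = (j:ℕ) => hij (Fin.ext h)) with h | h
  · exact key i j h
  · exact (key j i h).symm

lemma A_meas {M : ℕ} (A : Fin (3^M) → Set ℝ)
    (hA : ∀ i : Fin (3^M), A i =
      if (i : ℕ) = 0 then Set.Icc (0:ℝ) (1 / 3^M)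
      else Set.Ioc ((i : ℝ) / 3^M) (((i : ℝ) + 1) / 3^M)) :
    ∀ i, MeasurableSet (A i) := by
  intro i
  rw [hA i]
  split_ifs
  · exact measurableSet_Icc
  · exact measurableSet_Ioc

lemma sum_le_one {M : ℕ} (A : Fin (3^M) → Set ℝ)
    (hdisj : ∀ i j : Fin (3^M), i ≠ j → Disjoint (A i) (A j))
    (hmeas : ∀ i, MeasurableSet (A i))
    (μ : Measure ℝ) [IsProbabilityMeasure μ] (s : Finset (Fin (3^M))) :
    ∑ i ∈ s, μ (A i) ≤ 1 := by
  rw [← measure_biUnion_finset (fun i _ j _ hij => hdisj i j hij) (fun i _ => hmeas i)]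
  exact prob_le_one

lemma exists_half {α : Type*} [DecidableEq α] (m N : ℕ) (R : Finset α)
    (hR : R.card = 2 * m) (x : Fin N → α → ℝ) (a : ℝ)
    (hx0 : ∀ k i, 0 ≤ x k i)
    (hxa : ∀ k, ∑ i ∈ R, (x k i)^2 ≤ a)
    (hNa : (N:ℝ) * a ≤ 1/25) :
    ∃ I ⊆ R, I.card = m ∧ ∀ k, (∑ i ∈ I, x k i) - (∑ i ∈ R \ I, x k i) ≤ 1/5 := by
  classical
  -- enumeration of R
  let q : Fin (2 * m) ≃ {i // i ∈ R} := (finCongr hR.symm).trans R.equivFin.symm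
  let f0 : Fin m → α := fun j => ↑(q ⟨2 * (j : ℕ), by have := j.2; omega⟩)
  let f1 : Fin m → α := fun j => ↑(q ⟨2 * (j : ℕ) + 1, by have := j.2; omega⟩)
  have hq : Function.Injective (fun u : Fin (2*m) => ((q u : {i // i ∈ R}) : α)) :=
    fun u v h => q.injective (Subtype.coe_injective h)
  have hf0 : Function.Injective f0 := by
    intro j j' h
    have := hq h
    simp only [Fin.mk.injEq] at this
    exact Fin.ext (by omega)
  have hf1 : Function.Injective f1 := by
    intro j j' h
    have := hq h
    simp only [Fin.mk.injEq] at this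
    exact Fin.ext (by omega)
  have hmemR : ∀ j, f0 j ∈ R ∧ f1 j ∈ R := fun j => ⟨(q _).2, (q _).2⟩
  have hdisj01 : ∀ s t : Finset (Fin m), Disjoint (s.image f0) (t.image f1) := by
    intro s t
    rw [Finset.disjoint_left]
    rintro i hi0 hi1
    obtain ⟨j, _, rfl⟩ := Finset.mem_image.1 hi0
    obtain ⟨j', _, hj'⟩ := Finset.mem_image.1 hi1
    have := hq hj'
    simp only [Fin.mk.injEq] at this
    omega
  have hun : Finset.univ.image f0 ∪ Finset.univ.image f1 = R := by
    apply Finset.eq_of_subset_of_card_le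
    · intro i hi
      rcases Finset.mem_union.1 hi with h | h
      · obtain ⟨j, _, rfl⟩ := Finset.mem_image.1 h; exact (hmemR j).1
      · obtain ⟨j, _, rfl⟩ := Finset.mem_image.1 h; exact (hmemR j).2
    · rw [Finset.card_union_of_disjoint (hdisj01 _ _),
        Finset.card_image_of_injective _ hf0, Finset.card_image_of_injective _ hf1,
        hR, Finset.card_univ, Fintype.card_fin]
      omega
  -- the candidate halves
  set D : Finset (Fin m) → Fin N → ℝ := fun s k =>
    ∑ j : Fin m, (if j ∈ s then (x k (f0 j) - x k (f1 j)) else -(x k (f0 j) - x k (f1 j)))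
    with hD
  -- key: exists s with all D small
  have hcardpow : ((Finset.univ : Finset (Fin m)).powerset).card = 2 ^ m := by
    rw [Finset.card_powerset, Finset.card_univ, Fintype.card_fin]
  have hsum : ∑ s ∈ (Finset.univ : Finset (Fin m)).powerset, ∑ k, (D s k)^2
      ≤ ∑ s ∈ (Finset.univ : Finset (Fin m)).powerset, (1/25 : ℝ) := by
    rw [Finset.sum_comm, Finset.sum_const, hcardpow, nsmul_eq_mul]
    have : ∀ k : Fin N, ∑ s ∈ (Finset.univ : Finset (Fin m)).powerset, (D s k)^2
        ≤ 2 ^ m * a := by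
      intro k
      have horth := sum_sq_signs (Finset.univ : Finset (Fin m))
        (fun j => x k (f0 j) - x k (f1 j))
      rw [Finset.card_univ, Fintype.card_fin] at horth
      calc ∑ s ∈ (Finset.univ : Finset (Fin m)).powerset, (D s k)^2
          = 2 ^ m * ∑ j : Fin m, (x k (f0 j) - x k (f1 j))^2 := horth
        _ ≤ 2 ^ m * a := by
            apply mul_le_mul_of_nonneg_left _ (by positivity)
            calc ∑ j : Fin m, (x k (f0 j) - x k (f1 j))^2
                ≤ ∑ j : Fin m, ((x k (f0 j))^2 + (x k (f1 j))^2) := by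
                  apply Finset.sum_le_sum
                  intro j _
                  nlinarith [hx0 k (f0 j), hx0 k (f1 j)]
              _ = ∑ i ∈ Finset.univ.image f0, (x k i)^2
                    + ∑ i ∈ Finset.univ.image f1, (x k i)^2 := by
                  rw [Finset.sum_image (fun u _ v _ h => hf0 h),
                    Finset.sum_image (fun u _ v _ h => hf1 h), Finset.sum_add_distrib]
              _ = ∑ i ∈ R, (x k i)^2 := by
                  rw [← hun, Finset.sum_union (hdisj01 _ _)]
              _ ≤ a := hxa k
    push_cast
    calc ∑ k : Fin N, ∑ s ∈ (Finset.univ : Finset (Fin m)).powerset, (D s k)^2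
        ≤ ∑ _k : Fin N, (2:ℝ) ^ m * a := Finset.sum_le_sum (fun k _ => this k)
      _ = (2:ℝ) ^ m * ((N:ℝ) * a) := by rw [Finset.sum_const, Finset.card_univ,
            Fintype.card_fin, nsmul_eq_mul]; ring
      _ ≤ (2:ℝ) ^ m * (1/25) :=
          mul_le_mul_of_nonneg_left hNa (by positivity)
  obtain ⟨s, -, hs⟩ := Finset.exists_le_of_sum_le
    ⟨∅, Finset.mem_powerset.2 (Finset.empty_subset _)⟩ hsum
  refine ⟨s.image f0 ∪ sᶜ.image f1, ?_, ?_, ?_⟩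
  · intro i hi
    rcases Finset.mem_union.1 hi with h | h
    · obtain ⟨j, _, rfl⟩ := Finset.mem_image.1 h; exact (hmemR j).1
    · obtain ⟨j, _, rfl⟩ := Finset.mem_image.1 h; exact (hmemR j).2
  · rw [Finset.card_union_of_disjoint (hdisj01 _ _),
      Finset.card_image_of_injective _ hf0, Finset.card_image_of_injective _ hf1,
      Finset.card_add_card_compl]
    exact Fintype.card_fin m
  · have hJ : R \ (s.image f0 ∪ sᶜ.image f1) = sᶜ.image f0 ∪ s.image f1 := by
      have hdisjIJ : Disjoint (s.image f0 ∪ sᶜ.image f1) (sᶜ.image f0 ∪ s.image f1) := by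
        rw [Finset.disjoint_union_left, Finset.disjoint_union_right,
          Finset.disjoint_union_right]
        exact ⟨⟨(Finset.disjoint_image hf0).2 disjoint_compl_right, hdisj01 _ _⟩,
          ⟨(hdisj01 _ _).symm, (Finset.disjoint_image hf1).2 disjoint_compl_left⟩⟩
      have hIJ : (s.image f0 ∪ sᶜ.image f1) ∪ (sᶜ.image f0 ∪ s.image f1) = R := by
        rw [← hun]
        rw [show (s.image f0 ∪ sᶜ.image f1) ∪ (sᶜ.image f0 ∪ s.image f1)
            = (s.image f0 ∪ sᶜ.image f0) ∪ (sᶜ.image f1 ∪ s.image f1) by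
          ac_rfl]
        rw [← Finset.image_union, ← Finset.image_union, Finset.union_compl,
          Finset.union_comm sᶜ s, Finset.union_compl]
      rw [← hIJ, Finset.union_sdiff_cancel_left hdisjIJ]
    intro k
    rw [hJ]
    have hDk : (∑ i ∈ s.image f0 ∪ sᶜ.image f1, x k i)
        - (∑ i ∈ sᶜ.image f0 ∪ s.image f1, x k i) = D s k := by
      rw [Finset.sum_union (hdisj01 _ _), Finset.sum_union (hdisj01 _ _),
        Finset.sum_image (fun u _ v _ h => hf0 h), Finset.sum_image (fun u _ v _ h => hf1 h),
        Finset.sum_image (fun u _ v _ h => hf0 h), Finset.sum_image (fun u _ v _ h => hf1 h)]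
      rw [hD]
      simp only
      rw [← Finset.sum_add_sum_compl s]
      rw [Finset.sum_congr rfl (fun j hj => if_pos hj),
        Finset.sum_congr rfl (fun j hj => if_neg (Finset.mem_compl.1 hj))]
      simp only [Finset.sum_sub_distrib, Finset.sum_neg_distrib]
      ring
    rw [hDk]
    have h1 : (D s k)^2 ≤ 1/25 :=
      le_trans (Finset.single_le_sum (fun k _ => sq_nonneg (D s k)) (Finset.mem_univ k)) hs
    nlinarith


/-- Derandomized core of the no-finite-distribution-cover construction: after pruning
heavy intervals, one can pick `2·3^(M−1)` light intervals `R` and a half `I ⊆ R` so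
that `max_k (Σ_{i∈I} p_k(A_i) − Σ_{i∈R∖I} p_k(A_i)) ≤ 1/5`. -/
theorem stmt_15 (N M : ℕ) (hN : 2 ≤ N)
    (h1 : (N : ℝ) * (3:ℝ) ^ ((2 * (M:ℝ)) / 3) ≤ (3:ℝ) ^ ((M:ℝ) - 1))
    (h2 : Real.log N * (3:ℝ) ^ (-(M:ℝ) / 3) ≤ 1/50)
    (p : Fin N → Measure ℝ) (hprob : ∀ k, IsProbabilityMeasure (p k))
    (hp : ∀ k, p k (Set.Icc (0:ℝ) 1) = 1)
    (A : Fin (3^M) → Set ℝ)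
    (hA : ∀ i : Fin (3^M), A i =
      if (i : ℕ) = 0 then Set.Icc (0:ℝ) (1 / 3^M)
      else Set.Ioc ((i : ℝ) / 3^M) (((i : ℝ) + 1) / 3^M)) :
    ∃ R : Finset (Fin (3^M)), R.card = 2 * 3^(M-1) ∧
      (∀ i ∈ R, ∀ k, p k (A i) ≤ ENNReal.ofReal ((3:ℝ) ^ (-(2 * (M:ℝ)) / 3))) ∧
      ∃ I ⊆ R, I.card = 3^(M-1) ∧
        ∀ k, (∑ i ∈ I, (p k (A i)).toReal) - (∑ i ∈ R \ I, (p k (A i)).toReal)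
          ≤ 1/5 := by
  classical
  have h3 : (0:ℝ) < 3 := by norm_num
  set a : ℝ := (3:ℝ) ^ (-(2 * (M:ℝ)) / 3) with ha_def
  have ha_pos : 0 < a := Real.rpow_pos_of_pos h3 _
  have hlog2 : (0.6931471803 : ℝ) < Real.log 2 := Real.log_two_gt_d9
  have hlogN : Real.log 2 ≤ Real.log N :=
    Real.log_le_log (by norm_num) (by exact_mod_cast hN)
  set b : ℝ := (3:ℝ) ^ (-(M:ℝ) / 3) with hb_def
  have hb_pos : 0 < b := Real.rpow_pos_of_pos h3 _
  have hb : Real.log 2 * b ≤ 1/50 :=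
    le_trans (mul_le_mul_of_nonneg_right hlogN hb_pos.le) h2
  have hbsmall : b ≤ 3/25 := by nlinarith
  have hM1 : 1 ≤ M := by
    by_contra h
    push_neg at h
    interval_cases M
    · rw [hb_def] at hbsmall
      norm_num at hbsmall
  have hNa : (N:ℝ) * a ≤ 1/25 := by
    have e1 : a = (3:ℝ)^((2*(M:ℝ))/3) * (3:ℝ)^(-(4*(M:ℝ))/3) := by
      rw [ha_def, ← Real.rpow_add h3]
      congr 1
      ring
    have e2 : (3:ℝ)^((M:ℝ)-1) * (3:ℝ)^(-(4*(M:ℝ))/3) = b / 3 := by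
      rw [← Real.rpow_add h3, hb_def,
        show (M:ℝ) - 1 + -(4*(M:ℝ))/3 = -(M:ℝ)/3 + (-1) by ring,
        Real.rpow_add h3, Real.rpow_neg_one]
      ring
    have e3 : (N:ℝ) * a ≤ b / 3 := by
      calc (N:ℝ) * a = ((N:ℝ) * (3:ℝ)^((2*(M:ℝ))/3)) * (3:ℝ)^(-(4*(M:ℝ))/3) := by
            rw [e1]; ring
        _ ≤ (3:ℝ)^((M:ℝ)-1) * (3:ℝ)^(-(4*(M:ℝ))/3) :=
            mul_le_mul_of_nonneg_right h1 (Real.rpow_nonneg h3.le _)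
        _ = b / 3 := e2
    linarith
  have hcast : (3:ℝ)^((M:ℝ)-1) = ((3^(M-1) : ℕ) : ℝ) := by
    rw [show (M:ℝ)-1 = ((M-1:ℕ):ℝ) by rw [Nat.cast_sub hM1]; norm_num,
      Real.rpow_natCast]
    push_cast
    ring
  have hdisj := A_disj A hA
  have hmeas := A_meas A hA
  -- heavy sets
  let Hk : Fin N → Finset (Fin (3^M)) :=
    fun k => Finset.univ.filter (fun i => ¬ p k (A i) ≤ ENNReal.ofReal a)
  have hHk : ∀ k, ((Hk k).card : ℝ) * a ≤ 1 := by
    intro k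
    haveI := hprob k
    have hsum1 : ∑ i ∈ Hk k, p k (A i) ≤ 1 := sum_le_one A hdisj hmeas (p k) _
    have hlb : ((Hk k).card) • ENNReal.ofReal a ≤ ∑ i ∈ Hk k, p k (A i) :=
      Finset.card_nsmul_le_sum _ _ _
        (fun i hi => le_of_not_ge (Finset.mem_filter.1 hi).2)
    have hle := le_trans hlb hsum1
    rw [nsmul_eq_mul] at hle
    have := ENNReal.toReal_mono (by norm_num) hle
    simpa [ENNReal.toReal_mul, ENNReal.toReal_ofReal ha_pos.le] using this
  have hHk' : ∀ k, ((Hk k).card : ℝ) ≤ (3:ℝ)^((2*(M:ℝ))/3) := by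
    intro k
    have h := hHk k
    have key : (3:ℝ)^((2*(M:ℝ))/3) * a = 1 := by
      rw [ha_def, ← Real.rpow_add h3,
        show (2*(M:ℝ))/3 + -(2*(M:ℝ))/3 = 0 by ring, Real.rpow_zero]
    nlinarith
  set H := Finset.univ.biUnion Hk with hH_def
  have hHnat : H.card ≤ 3^(M-1) := by
    have hcard : (H.card : ℝ) ≤ (3:ℝ)^((M:ℝ)-1) := by
      calc (H.card : ℝ) ≤ ∑ k, ((Hk k).card : ℝ) := by
            have := Finset.card_biUnion_le (s := Finset.univ) (t := Hk)
            exact_mod_cast this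
        _ ≤ ∑ _k : Fin N, (3:ℝ)^((2*(M:ℝ))/3) :=
            Finset.sum_le_sum (fun k _ => hHk' k)
        _ = (N:ℝ) * (3:ℝ)^((2*(M:ℝ))/3) := by
            rw [Finset.sum_const, Finset.card_univ, Fintype.card_fin, nsmul_eq_mul]
        _ ≤ (3:ℝ)^((M:ℝ)-1) := h1
    rw [hcast] at hcard
    exact_mod_cast hcard
  have h3M : (3:ℕ)^M = 3 * 3^(M-1) := by
    conv_lhs => rw [show M = M - 1 + 1 by omega]
    rw [pow_succ]
    ring
  have hLcard : 2*3^(M-1) ≤ (Finset.univ \ H).card := by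
    rw [Finset.card_sdiff_of_subset (Finset.subset_univ H), Finset.card_univ, Fintype.card_fin]
    omega
  obtain ⟨R, hRsub, hRcard⟩ := Finset.exists_subset_card_eq hLcard
  have hRlight : ∀ i ∈ R, ∀ k, p k (A i) ≤ ENNReal.ofReal a := by
    intro i hi k
    by_contra hcon
    have : i ∈ H := Finset.mem_biUnion.2
      ⟨k, Finset.mem_univ k, Finset.mem_filter.2 ⟨Finset.mem_univ i, hcon⟩⟩
    exact (Finset.mem_sdiff.1 (hRsub hi)).2 this
  refine ⟨R, hRcard, hRlight, ?_⟩
  have hx0 : ∀ (k : Fin N) (i : Fin (3^M)), 0 ≤ (p k (A i)).toReal :=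
    fun k i => ENNReal.toReal_nonneg
  have hxa : ∀ k, ∑ i ∈ R, ((p k (A i)).toReal)^2 ≤ a := by
    intro k
    haveI := hprob k
    have hone : ∑ i ∈ R, (p k (A i)).toReal ≤ 1 := by
      rw [← ENNReal.toReal_sum (fun i _ => measure_ne_top _ _)]
      have h := sum_le_one A hdisj hmeas (p k) R
      simpa using ENNReal.toReal_mono (by norm_num) h
    have hxle : ∀ i ∈ R, (p k (A i)).toReal ≤ a := fun i hi =>
      ENNReal.toReal_le_of_le_ofReal ha_pos.le (hRlight i hi k)
    calc ∑ i ∈ R, ((p k (A i)).toReal)^2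
        ≤ ∑ i ∈ R, a * (p k (A i)).toReal := by
          apply Finset.sum_le_sum
          intro i hi
          nlinarith [hx0 k i, hxle i hi]
      _ = a * ∑ i ∈ R, (p k (A i)).toReal := (Finset.mul_sum _ _ _).symm
      _ ≤ a * 1 := mul_le_mul_of_nonneg_left hone ha_pos.le
      _ = a := mul_one a
  obtain ⟨I, hIR, hIcard, hI⟩ := exists_half (3^(M-1)) N R hRcard
    (fun k i => (p k (A i)).toReal) a hx0 hxa hNa
  exact ⟨I, hIR, hIcard, hI⟩
end
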